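/- Let X be a metric space, f : X → X a map, and C > 0 such that |d_X(f(x), f(y)) − d_X(x,y)| < C for all x, y ∈ X. Then d(x, y') := inf_{u ∈ X} [d_X(x,u) + C + d_X(f(u), y)] (for x in the first copy and y' in the second copy of X), together with d_X on each copy, defines a metric on the double X ⊔ X'. -/

import Mathlib

/-!
The double is Mathlib's approximate gluing `Metric.glueDist id f C` of `X` with itself along
`id` and `f`: the hypothesis says that `id` and `f` distort distances by less than `C ≤ 2 C`,
which is exactly what `Metric.glueMetricApprox` needs to make `X ⊕ X` a metric space in which
the two copies are at distance at least `C`.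
-/

/-- A function `d : α → α → ℝ` is a metric. -/
def IsMetric {α : Type*} (d : α → α → ℝ) : Prop :=
  (∀ p q, d p q = 0 ↔ p = q) ∧ (∀ p q, d p q = d q p) ∧ ∀ p q r, d p r ≤ d p q + d q r

/-- The distance on the double `X ⊔ X'` built from a map `f : X → X` and `C > 0`:
`d_X` within each copy, and `d(x, y') = inf_u [d_X(x,u) + C + d_X(f u, y)]` between
the copies. -/
noncomputable def Dbl {X : Type*} [MetricSpace X] (f : X → X) (C : ℝ) :
    X ⊕ X → X ⊕ X → ℝ
  | Sum.inl x, Sum.inl y => dist x y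
  | Sum.inr x, Sum.inr y => dist x y
  | Sum.inl x, Sum.inr y => ⨅ u : X, dist x u + C + dist (f u) y
  | Sum.inr y, Sum.inl x => ⨅ u : X, dist x u + C + dist (f u) y

theorem isMetric_dist {α : Type*} [MetricSpace α] : IsMetric (dist : α → α → ℝ) :=
  ⟨fun _ _ => dist_eq_zero, dist_comm, dist_triangle⟩

theorem dbl_eq_glueDist {X : Type*} [MetricSpace X] [Nonempty X] (f : X → X) (C : ℝ) :
    Dbl f C = Metric.glueDist id f C := by
  have glued (x y : X) :
      ⨅ u, dist x u + C + dist (f u) y = (⨅ u, dist x (id u) + dist y (f u)) + C := by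
    rw [ciInf_add ⟨0, Set.forall_mem_range.2 fun _ => by positivity⟩]
    simp only [id, dist_comm y, add_right_comm]
  ext (x | x) (y | y)
  · rfl
  · exact glued x y
  · exact glued y x
  · rfl

/-- if `|d_X(f x, f y) - d_X(x, y)| < C` for all `x, y`, then `Dbl f C`
is a metric on the double of `X`, with mixed distances bounded below by `C`. -/
theorem stmt10 {X : Type*} [MetricSpace X] [Nonempty X] (f : X → X) (C : ℝ) (hC : 0 < C)
    (hf : ∀ x y : X, |dist (f x) (f y) - dist x y| < C) :
    IsMetric (Dbl f C) ∧ ∀ x y : X, C ≤ Dbl f C (Sum.inl x) (Sum.inr y) := by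
  rw [dbl_eq_glueDist]
  let _ : MetricSpace (X ⊕ X) := Metric.glueMetricApprox id f C hC fun p q => by
    rw [abs_sub_comm]
    exact (hf p q).le.trans (by linarith)
  exact ⟨isMetric_dist, Metric.le_glueDist_inl_inr id f C⟩
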